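/- In the greedy insertion procedure that adds features one by one in a fixed order to a baseline, if at some step the accumulated feature set first becomes sufficient for class c, then the accumulated set contains an abductive explanation, and the last-added feature belongs to some abductive explanation contained in it. -/

import Mathlib

/-!
Sufficiency is upward closed and `Finset F` is well-founded under `⊂`, so the sufficient prefix
`S k` contains a subset-minimal sufficient set. Since `S k = insert (p (k - 1)) (S (k - 1))`, a
sufficient `X ⊆ S k` avoiding `p (k - 1)` would lie in `S (k - 1)` and make it sufficient,
against the minimality of `k`.
-/

open Finset

section Sufficiency

variable {F : Type*} {D : F → Type*} {K : Type*}

def IsSufficient (f : (∀ i, D i) → K) (v : ∀ i, D i) (c : K) (X : Finset F) : Prop :=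
  ∀ x : ∀ i, D i, (∀ i ∈ X, x i = v i) → f x = c

variable {f : (∀ i, D i) → K} {v : ∀ i, D i} {c : K}

theorem IsSufficient.mono {X Y : Finset F} (hX : IsSufficient f v c X) (hXY : X ⊆ Y) :
    IsSufficient f v c Y :=
  fun x hx => hX x fun i hi => hx i (hXY hi)

theorem IsSufficient.exists_minimal_subset {S : Finset F} (hS : IsSufficient f v c S) :
    ∃ X ⊆ S, Minimal (IsSufficient f v c) X :=
  exists_minimal_le_of_wellFoundedLT _ S hS

end Sufficiency

theorem image_filter_val_lt_succ_eq_insert {F : Type*} [DecidableEq F] {n : ℕ} (p : Fin n → F)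
    {m : ℕ} (hm : m < n) :
    (univ.filter (fun j : Fin n => (j : ℕ) < m + 1)).image p =
      insert (p ⟨m, hm⟩) ((univ.filter (fun j : Fin n => (j : ℕ) < m)).image p) := by
  ext i
  simp only [mem_image, mem_filter, mem_univ, true_and, mem_insert]
  constructor
  · rintro ⟨j, hj, rfl⟩
    rcases Nat.lt_or_ge (j : ℕ) m with hlt | hge
    · exact Or.inr ⟨j, hlt, rfl⟩
    · exact Or.inl (congrArg p (Fin.ext (by simp only; omega)))
  · rintro (rfl | ⟨j, hj, rfl⟩)
    · exact ⟨_, Nat.lt_succ_self m, rfl⟩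
    · exact ⟨j, by omega, rfl⟩

/-- in the greedy insertion procedure, when the prefix S_k first
becomes sufficient, it contains an abductive explanation, and every abductive
explanation contained in S_k contains the last-added feature p_k. -/
theorem stmt_15 {F : Type*} [DecidableEq F] {D : F → Type*}
    {K : Type*}
    (f : (∀ i, D i) → K) (v : ∀ i, D i) (c : K)
    (n : ℕ) (p : Fin n → F)
    (S : ℕ → Finset F)
    (hS : ∀ k, S k = (Finset.univ.filter (fun j : Fin n => (j : ℕ) < k)).image p)
    (k : ℕ) (hk1 : 1 ≤ k) (hkn : k ≤ n)
    -- S_k is sufficient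
    (hsuff : ∀ x : ∀ i, D i, (∀ i ∈ S k, x i = v i) → f x = c)
    -- k is the first index at which the prefix becomes sufficient
    (hfirst : ∀ m < k, ¬ (∀ x : ∀ i, D i, (∀ i ∈ S m, x i = v i) → f x = c)) :
    -- (1) S_k contains an abductive explanation
    (∃ X : Finset F, X ⊆ S k ∧
      (∀ x : ∀ i, D i, (∀ i ∈ X, x i = v i) → f x = c) ∧
      ∀ X' : Finset F, X' ⊂ X →
        ¬ (∀ x : ∀ i, D i, (∀ i ∈ X', x i = v i) → f x = c)) ∧
    -- (2) every abductive explanation contained in S_k contains p_k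
    (∀ X : Finset F, X ⊆ S k →
      ((∀ x : ∀ i, D i, (∀ i ∈ X, x i = v i) → f x = c) ∧
        ∀ X' : Finset F, X' ⊂ X →
          ¬ (∀ x : ∀ i, D i, (∀ i ∈ X', x i = v i) → f x = c)) →
      p ⟨k - 1, by omega⟩ ∈ X) := by
  have hSk : S k = insert (p ⟨k - 1, by omega⟩) (S (k - 1)) := by
    have h := image_filter_val_lt_succ_eq_insert p (m := k - 1) (by omega)
    rwa [Nat.sub_add_cancel hk1, ← hS, ← hS] at h
  refine ⟨?_, fun X hXS ⟨hX, _⟩ => ?_⟩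
  · have hsuffS : IsSufficient f v c (S k) := hsuff
    obtain ⟨X, hXS, hX⟩ := hsuffS.exists_minimal_subset
    exact ⟨X, hXS, minimal_iff_forall_lt.mp hX⟩
  · by_contra hlast
    rw [hSk, subset_insert_iff_of_notMem hlast] at hXS
    exact hfirst (k - 1) (by omega) (IsSufficient.mono hX hXS)
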